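/- The one-state Turing machine M_cc halts on input u^n 0^m h whenever n ≥ 2^m − 1. -/

import Mathlib

inductive Dir : Type
  | L | R
deriving DecidableEq

def Dir.move : Dir → ℤ
  | .L => -1
  | .R => 1

/-- A one-state Turing machine: a blank symbol, a set of halting symbols
(as a Boolean predicate) and a transition function on the tape alphabet. -/
structure OneStateTM (Γ : Type) where
  blank : Γ
  halt : Γ → Bool
  δ : Γ → Γ × Dir

/-- A configuration: a bi-infinite tape and a head position. -/
structure Cfg (Γ : Type) where
  tape : ℤ → Γ
  pos : ℤ

/-- One step of the machine; `none` means the machine has halted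
(the head reads a halting symbol). -/
def OneStateTM.step {Γ : Type} (M : OneStateTM Γ) (c : Cfg Γ) : Option (Cfg Γ) :=
  if M.halt (c.tape c.pos) then none
  else some ⟨Function.update c.tape c.pos (M.δ (c.tape c.pos)).1,
             c.pos + (M.δ (c.tape c.pos)).2.move⟩

/-- Initial tape: the input written in cells 0,…,len−1, blanks elsewhere. -/
def OneStateTM.initTape {Γ : Type} (M : OneStateTM Γ) (l : List Γ) : ℤ → Γ :=
  fun i => if i < 0 then M.blank else l.getD i.toNat M.blank

/-- The machine halts starting from configuration `c`. -/
def OneStateTM.HaltsFrom {Γ : Type} (M : OneStateTM Γ) (c : Cfg Γ) : Prop :=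
  ∃ n : ℕ, (fun o => Option.bind o M.step)^[n] (some c) = none

/-- The machine halts on input `l` (head initially on the leftmost input symbol). -/
def OneStateTM.HaltsOn {Γ : Type} (M : OneStateTM Γ) (l : List Γ) : Prop :=
  M.HaltsFrom ⟨M.initTape l, 0⟩

/-- The tape alphabet of M_cc: blank, u, U, h, 0, 1, Z, C, B. -/
inductive Tcc : Type
  | blank | u | bigU | h | z0 | one | Z | C | B
deriving DecidableEq

/-- The one-state Turing machine M_cc. -/
def Mcc : OneStateTM Tcc where
  blank := .blank
  halt := fun a => match a with | .h => true | _ => false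
  δ := fun a => match a with
    | .u => (.bigU, .R)
    | .z0 => (.one, .L)
    | .bigU => (.C, .R)
    | .one => (.Z, .R)
    | .Z => (.z0, .L)
    | .C => (.B, .L)
    | .B => (.C, .R)
    | .blank => (.blank, .L)
    | .h => (.h, .R)   -- irrelevant: h is halting

/-- The input u^n 0^m h. -/
def ccInput (n m : ℕ) : List Tcc :=
  List.replicate n .u ++ List.replicate m .z0 ++ [.h]

/-!
Sweeping right over `u^n` leaves `U^n` behind the head. A block `U^a C^b` to the left of the head
sends it back `a` times: each visit turns `C^b` into `B^b`, the last `U` into `C`, and `B^b`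
back into `C^b`. The digits `0^m` then act as a binary counter: while a digit cycles through
`Z → 0 → 1 → Z` it sends the head back once to its right for every two returns from its left.
Entering the first digit costs one return and leaves a `Z`, so passing all `m` digits and reading
`h` needs `1 + 2 (2^(m-1) - 1) = 2^m - 1` returns from the block `U^n`.
-/

open Function StateTransition

namespace OneStateTM

variable {Γ : Type} (M : OneStateTM Γ)

theorem haltsFrom_of_step_eq_none {c : Cfg Γ} (h : M.step c = none) : M.HaltsFrom c :=
  ⟨1, h⟩

theorem HaltsFrom.of_reaches {c c' : Cfg Γ} (hr : Reaches M.step c c') (h : M.HaltsFrom c') :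
    M.HaltsFrom c := by
  induction hr using Relation.ReflTransGen.head_induction_on with
  | refl => exact h
  | head hstep _ ih =>
    obtain ⟨n, hn⟩ := ih
    refine ⟨n + 1, ?_⟩
    rw [iterate_succ_apply, Option.bind_some, Option.mem_def.mp hstep]
    exact hn

variable {M}

theorem reaches_step_right {t : ℤ → Γ} {q : ℤ} {a b : Γ} (ht : t q = a) (ha : M.halt a = false)
    (hδ : M.δ a = (b, .R)) : Reaches M.step ⟨t, q⟩ ⟨update t q b, q + 1⟩ :=
  .single (by simp [step, ht, ha, hδ, Dir.move])

theorem reaches_step_left {t : ℤ → Γ} {q : ℤ} {a b : Γ} (ht : t q = a) (ha : M.halt a = false)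
    (hδ : M.δ a = (b, .L)) : Reaches M.step ⟨t, q⟩ ⟨update t q b, q - 1⟩ :=
  .single (by simp [step, ht, ha, hδ, Dir.move, sub_eq_add_neg])

theorem reaches_sweep_right {a b : Γ} (ha : M.halt a = false) (hδ : M.δ a = (b, .R)) :
    ∀ (n : ℕ) (t : ℤ → Γ) (p : ℤ), (∀ i, p ≤ i → i < p + n → t i = a) →
      ∃ t', Reaches M.step ⟨t, p⟩ ⟨t', p + n⟩ ∧ (∀ i, p ≤ i → i < p + n → t' i = b) ∧
        ∀ i, i < p ∨ p + n ≤ i → t' i = t i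
  | 0, t, p, _ => ⟨t, by simpa using .refl, by omega, fun _ _ => rfl⟩
  | n + 1, t, p, ht => by
    obtain ⟨t', hr, hin, hout⟩ := reaches_sweep_right ha hδ n (update t p b) (p + 1)
      fun i h₁ h₂ => by rw [update_of_ne (by omega)]; exact ht i (by omega) (by push_cast; omega)
    have hpos : p + 1 + n = p + ↑(n + 1) := by push_cast; ring
    refine ⟨t', hpos ▸ (reaches_step_right (ht p le_rfl (by omega)) ha hδ).trans hr,
      fun i h₁ h₂ => ?_, fun i hi => ?_⟩
    · rcases eq_or_ne i p with rfl | _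
      · rw [hout i (by omega), update_self]
      · exact hin i (by omega) (by omega)
    · rw [hout i (by omega), update_of_ne (by omega)]

theorem reaches_sweep_left {a b : Γ} (ha : M.halt a = false) (hδ : M.δ a = (b, .L)) :
    ∀ (n : ℕ) (t : ℤ → Γ) (q : ℤ), (∀ i, q - n < i → i ≤ q → t i = a) →
      ∃ t', Reaches M.step ⟨t, q⟩ ⟨t', q - n⟩ ∧ (∀ i, q - n < i → i ≤ q → t' i = b) ∧
        ∀ i, i ≤ q - n ∨ q < i → t' i = t i
  | 0, t, q, _ => ⟨t, by simpa using .refl, by omega, fun _ _ => rfl⟩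
  | n + 1, t, q, ht => by
    obtain ⟨t', hr, hin, hout⟩ := reaches_sweep_left ha hδ n (update t q b) (q - 1)
      fun i h₁ h₂ => by rw [update_of_ne (by omega)]; exact ht i (by push_cast; omega) (by omega)
    have hpos : q - 1 - n = q - ↑(n + 1) := by push_cast; ring
    refine ⟨t', hpos ▸ (reaches_step_left (ht q (by omega) le_rfl) ha hδ).trans hr,
      fun i h₁ h₂ => ?_, fun i hi => ?_⟩
    · rcases eq_or_ne i q with rfl | _
      · rw [hout i (by omega), update_self]
      · exact hin i (by push_cast at h₁; omega) (by omega)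
    · rw [hout i (by push_cast at hi; omega), update_of_ne (by push_cast at hi; omega)]

variable (M) in
/-- `M.ReturnsFromLeft p k t`: `k` times in succession, the head entering the cells `< p` of `t`
at `p - 1` comes back to `p` having left the cells `≥ p` unchanged, whatever they contain. -/
def ReturnsFromLeft (p : ℤ) : ℕ → (ℤ → Γ) → Prop
  | 0, _ => True
  | k + 1, t => ∀ g : ℤ → Γ, (∀ i < p, g i = t i) →
      ∃ t', Reaches M.step ⟨g, p - 1⟩ ⟨t', p⟩ ∧ (∀ i, p ≤ i → t' i = g i) ∧ ReturnsFromLeft p k t'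

theorem ReturnsFromLeft.congr {p : ℤ} {k : ℕ} {t g : ℤ → Γ} (h : M.ReturnsFromLeft p k t)
    (hg : ∀ i < p, g i = t i) : M.ReturnsFromLeft p k g :=
  match k with
  | 0 => trivial
  | _ + 1 => fun g' hg' => h g' fun i hi => (hg' i hi).trans (hg i hi)

theorem ReturnsFromLeft.reaches_of_step_left {p : ℤ} {k : ℕ} {t g : ℤ → Γ} {a b : Γ}
    (h : M.ReturnsFromLeft p (k + 1) t) (hg : ∀ i < p, g i = t i) (hgp : g p = a)
    (ha : M.halt a = false) (hδ : M.δ a = (b, .L)) :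
    ∃ t', Reaches M.step ⟨g, p⟩ ⟨t', p⟩ ∧ t' p = b ∧ (∀ i, p < i → t' i = g i) ∧
      M.ReturnsFromLeft p k t' := by
  obtain ⟨t', hr, hout, hk⟩ := h (update g p b) fun i hi => by
    rw [update_of_ne hi.ne]; exact hg i hi
  refine ⟨t', (reaches_step_left hgp ha hδ).trans hr, ?_, fun i hi => ?_, hk⟩
  · rw [hout p le_rfl, update_self]
  · rw [hout i hi.le, update_of_ne hi.ne']

end OneStateTM

open OneStateTM

theorem Mcc_returnsFromLeft_of_U_C (a : ℕ) :
    ∀ (b : ℕ) (t : ℤ → Tcc) (p : ℤ), (∀ i, p - (a + b : ℕ) ≤ i → i < p - b → t i = .bigU) →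
      (∀ i, p - b ≤ i → i < p → t i = .C) → Mcc.ReturnsFromLeft p a t := by
  induction a with
  | zero => intros; trivial
  | succ a ih =>
    intro b t p hU hC g hg
    obtain ⟨t₁, hr₁, hin₁, hout₁⟩ := reaches_sweep_left (M := Mcc) (a := .C) rfl rfl b g (p - 1)
      fun i h₁ h₂ => (hg i (by omega)).trans (hC i (by omega) (by omega))
    have hU₁ : t₁ (p - 1 - b) = .bigU := by
      rw [hout₁ _ (by omega), hg _ (by omega)]; exact hU _ (by push_cast; omega) (by omega)
    obtain ⟨t₃, hr₃, hin₃, hout₃⟩ := reaches_sweep_right (M := Mcc) (a := .B) rfl rfl b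
      (update t₁ (p - 1 - b) .C) (p - 1 - b + 1)
      fun i h₁ h₂ => by rw [update_of_ne (by omega)]; exact hin₁ i (by omega) (by omega)
    rw [show p - 1 - b + 1 + b = p by ring] at hr₃
    refine ⟨t₃, (hr₁.trans (reaches_step_right hU₁ rfl rfl)).trans hr₃, fun i hi => ?_,
      ih (b + 1) t₃ p (fun i h₁ h₂ => ?_) fun i h₁ h₂ => ?_⟩
    · rw [hout₃ i (by omega), update_of_ne (by omega), hout₁ i (by omega)]
    · push_cast at h₁ h₂
      rw [hout₃ i (by omega), update_of_ne (by omega), hout₁ i (by omega), hg i (by omega)]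
      exact hU i (by push_cast; omega) (by omega)
    · push_cast at h₁
      rcases eq_or_ne i (p - 1 - b) with rfl | _
      · rw [hout₃ _ (by omega), update_self]
      · exact hin₃ i (by omega) (by omega)

/-- Each return from the left of `p + 1` runs the digit at `p` through `Z → 0 → 1 → Z`, using two
returns to `p`. -/
theorem Mcc_returnsFromLeft_succ_of_Z (r : ℕ) :
    ∀ (k : ℕ) (t : ℤ → Tcc) (p : ℤ), Mcc.ReturnsFromLeft p k t → t p = .Z → 2 * r ≤ k →
      Mcc.ReturnsFromLeft (p + 1) r t := by
  induction r with
  | zero => intros; trivial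
  | succ r ih =>
    intro k t p h hZ hk g hg
    obtain ⟨k, rfl⟩ : ∃ k', k = k' + 2 := ⟨k - 2, by omega⟩
    obtain ⟨t₁, hr₁, h0, hout₁, h₁⟩ := h.reaches_of_step_left (fun i hi => hg i (by omega))
      ((hg p (by omega)).trans hZ) rfl rfl
    obtain ⟨t₂, hr₂, h1, hout₂, h₂⟩ := h₁.reaches_of_step_left (fun _ _ => rfl) h0 rfl rfl
    have hr₃ := reaches_step_right (M := Mcc) h1 rfl rfl
    refine ⟨update t₂ p .Z, by rw [add_sub_cancel_right]; exact hr₁.trans (hr₂.trans hr₃),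
      fun i hi => ?_,
      ih k _ p (h₂.congr fun i hi => update_of_ne hi.ne _ _) (update_self _ _ _) (by omega)⟩
    rw [update_of_ne (by omega), hout₂ i (by omega), hout₁ i (by omega)]

theorem Mcc_haltsFrom_of_returnsFromLeft (m : ℕ) :
    ∀ (k : ℕ) (t : ℤ → Tcc) (p : ℤ), Mcc.ReturnsFromLeft p k t → 2 ^ m - 1 ≤ k →
      (∀ i, p ≤ i → i < p + m → t i = .z0) → t (p + m) = .h → Mcc.HaltsFrom ⟨t, p⟩ := by
  induction m with
  | zero =>
    intro k t p _ _ _ hh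
    exact haltsFrom_of_step_eq_none _ (by simp_all [OneStateTM.step, Mcc])
  | succ m ih =>
    intro k t p h hk hz hh
    have hk' : 2 * (2 ^ m - 1) + 1 ≤ k := by
      have := Nat.one_le_two_pow (n := m); rw [pow_succ] at hk; omega
    obtain ⟨k, rfl⟩ : ∃ k', k = k' + 1 := ⟨k - 1, by omega⟩
    obtain ⟨t₁, hr₁, h1, hout₁, h₁⟩ :=
      h.reaches_of_step_left (fun _ _ => rfl) (hz p le_rfl (by omega)) rfl rfl
    have hr₂ := reaches_step_right (M := Mcc) h1 rfl rfl
    have hsame : ∀ i, p < i → update t₁ p .Z i = t i := fun i hi => by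
      rw [update_of_ne hi.ne', hout₁ i hi]
    refine HaltsFrom.of_reaches _ (hr₁.trans hr₂) (ih (2 ^ m - 1) _ (p + 1)
      (Mcc_returnsFromLeft_succ_of_Z _ k _ p (h₁.congr fun i hi => update_of_ne hi.ne _ _)
        (update_self _ _ _) (by omega)) le_rfl (fun i h₁ h₂ => ?_) ?_)
    · rw [hsame i (by omega)]; exact hz i (by omega) (by push_cast; omega)
    · rw [hsame _ (by omega)]; convert hh using 2; push_cast; ring

theorem Mcc_initTape_ccInput (n m i : ℕ) :
    Mcc.initTape (ccInput n m) i =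
      if i < n then .u else if i < n + m then .z0 else if i = n + m then .h else .blank := by
  simp only [OneStateTM.initTape, ccInput, List.getD_eq_getElem?_getD, List.getElem?_append,
    List.getElem?_replicate, List.length_replicate, List.getElem?_singleton,
    List.length_append, Int.toNat_natCast]
  split_ifs <;> first | omega | rfl

/-- M_cc halts on input u^n 0^m h whenever n ≥ 2^m − 1. -/
theorem Mcc_halts_of_ge : ∀ n m : ℕ, 2 ^ m - 1 ≤ n → Mcc.HaltsOn (ccInput n m) := by
  intro n m hnm
  obtain ⟨t, hr, hU, hout⟩ := reaches_sweep_right (M := Mcc) (a := .u) rfl rfl n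
    (Mcc.initTape (ccInput n m)) 0 fun i h₁ h₂ => by
      lift i to ℕ using h₁; rw [Mcc_initTape_ccInput, if_pos (by omega)]
  have hcells : ∀ i : ℕ, n ≤ i → t i = Mcc.initTape (ccInput n m) i := fun i hi =>
    hout i (by omega)
  rw [zero_add] at hr
  refine HaltsFrom.of_reaches _ hr (Mcc_haltsFrom_of_returnsFromLeft m n t n
    (Mcc_returnsFromLeft_of_U_C n 0 t n (fun i h₁ h₂ => hU i (by omega) (by omega)) (by omega))
    hnm (fun i h₁ h₂ => ?_) ?_)
  · lift i to ℕ using (by omega)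
    rw [hcells i (by omega), Mcc_initTape_ccInput, if_neg (by omega), if_pos (by omega)]
  · rw [← Nat.cast_add, hcells _ (by omega), Mcc_initTape_ccInput, if_neg (by omega),
      if_neg (by omega), if_pos rfl]
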